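/- arXiv:2305.00203 — 2 statements merged into one kernel-verified Lean document; each statement's English description precedes it below -/
import Mathlib

section
/- Let q ≥ 2, α ∈ {0,1}, γ ≥ 0, Υ > 0, 1 ≤ k ≤ n, and let A₁, …, A_q be real symmetric positive semidefinite n×n matrices. Let (ρ_j)_{j ≥ 0} be a sequence of positive reals with ρ_j → ∞, and let (x_j, y_j, z_j)_{j ≥ 0} be sequences in ℝ^n with ‖y_j‖ = 1 and ‖y_j‖₀ ≤ k for all j, and q_{ρ_j}(x_j, y_j, z_j) ≤ Υ for all j. Then there exist a strictly increasing map σ : ℕ → ℕ, a point x* ∈ ℝ^n, and an index set L ⊆ {1,…,n} with |L| = k such that x_{σ(j)} → x*, y_{σ(j)} → x*, z_{σ(j)} → x*, ‖x*‖ = 1, and x*_i = 0 for all i ∉ L. -/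
open Matrix Finset Filter Topology

/-- Squared Euclidean norm on `ℝ^n`. -/
noncomputable def sqnorm {n : ℕ} (x : Fin n → ℝ) : ℝ := ∑ i, x i ^ 2

/-- Euclidean norm on `ℝ^n`. -/
noncomputable def eucNorm {n : ℕ} (x : Fin n → ℝ) : ℝ := Real.sqrt (sqnorm x)

/-- Quadratic form `xᵀ A x`. -/
noncomputable def qf {n : ℕ} (A : Matrix (Fin n) (Fin n) ℝ) (x : Fin n → ℝ) : ℝ :=
  x ⬝ᵥ A.mulVec x

/-- The penalized objective
`q_ρ(x,y,z) = α xᵀA₁x + γ Σ_{i=2}^{q} (zᵀA_i z)(xᵀA_i x) + ρ(‖x−y‖² + ‖x−z‖²)`. -/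
noncomputable def qrho {n : ℕ} (q : ℕ) (A : ℕ → Matrix (Fin n) (Fin n) ℝ)
    (α γ ρ : ℝ) (x y z : Fin n → ℝ) : ℝ :=
  α * qf (A 1) x + γ * ∑ i ∈ Finset.Icc 2 q, qf (A i) z * qf (A i) x
    + ρ * (sqnorm (x - y) + sqnorm (x - z))

/-- Smallest eigenvalue of a real matrix: the infimum of the set of `μ` such that
`A - μ I` is singular. -/
noncomputable def smallestEigenvalue {n : ℕ} (A : Matrix (Fin n) (Fin n) ℝ) : ℝ :=
  sInf {μ : ℝ | ¬ IsUnit (A - μ • (1 : Matrix (Fin n) (Fin n) ℝ))}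

/-- Largest eigenvalue of a real matrix: the supremum of the set of `μ` such that
`A - μ I` is singular. -/
noncomputable def largestEigenvalue {n : ℕ} (A : Matrix (Fin n) (Fin n) ℝ) : ℝ :=
  sSup {μ : ℝ | ¬ IsUnit (A - μ • (1 : Matrix (Fin n) (Fin n) ℝ))}

/-- Coordinate projection `x_L`: keeps the coordinates in `L`, zeroes the others. -/
noncomputable def proj {n : ℕ} (L : Finset (Fin n)) (x : Fin n → ℝ) : Fin n → ℝ :=
  fun i => if i ∈ L then x i else 0

/-!
Since the matrices are positive semidefinite and `α, γ ≥ 0`, the bound `q_ρ ≤ Υ` leaves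
`ρ (‖x − y‖² + ‖x − z‖²) ≤ Υ`, so both distances tend to `0` as `ρ → ∞`. The `y_j` lie on the
unit sphere, so a subsequence converges to some `x*` with `‖x*‖ = 1`, and `x_j, z_j` follow it.
A coordinate that is nonzero in `x*` is nonzero in `y_j` for large `j`, so `x*` has at most
`k` nonzero coordinates, and any `k`-set `L` containing them will do.
-/

section Norms

variable {n : ℕ}

lemma sqnorm_nonneg (x : Fin n → ℝ) : 0 ≤ sqnorm x :=
  Finset.sum_nonneg fun _ _ => sq_nonneg _

lemma norm_le_eucNorm (x : Fin n → ℝ) : ‖x‖ ≤ eucNorm x := by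
  refine (pi_norm_le_iff_of_nonneg (Real.sqrt_nonneg _)).2 fun i => Real.abs_le_sqrt ?_
  exact Finset.single_le_sum (f := fun i => x i ^ 2) (fun _ _ => sq_nonneg _) (mem_univ i)

lemma continuous_eucNorm : Continuous (eucNorm : (Fin n → ℝ) → ℝ) :=
  Real.continuous_sqrt.comp (continuous_finsetSum _ fun i _ => (continuous_apply i).pow 2)

lemma tendsto_zero_of_sqnorm_tendsto_zero {ι : Type*} {l : Filter ι} {d : ι → Fin n → ℝ}
    (hd : Tendsto (fun j => sqnorm (d j)) l (𝓝 0)) : Tendsto d l (𝓝 0) := by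
  refine squeeze_zero_norm (fun j => norm_le_eucNorm (d j)) ?_
  simpa [eucNorm] using hd.sqrt

end Norms

lemma qf_nonneg {n : ℕ} {A : Matrix (Fin n) (Fin n) ℝ} (hA : A.PosSemidef) (x : Fin n → ℝ) :
    0 ≤ qf A x := by
  simpa [qf] using hA.dotProduct_mulVec_nonneg x

lemma penalty_le_qrho {n q : ℕ} {A : ℕ → Matrix (Fin n) (Fin n) ℝ} {α γ : ℝ} (hα : 0 ≤ α)
    (hγ : 0 ≤ γ) (hA : ∀ i, 1 ≤ i → i ≤ q → (A i).PosSemidef) (hq : 1 ≤ q) (ρ : ℝ)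
    (x y z : Fin n → ℝ) :
    ρ * (sqnorm (x - y) + sqnorm (x - z)) ≤ qrho q A α γ ρ x y z := by
  have hA₁ : 0 ≤ α * qf (A 1) x := mul_nonneg hα (qf_nonneg (hA 1 le_rfl hq) x)
  have hA_rest : 0 ≤ γ * ∑ i ∈ Icc 2 q, qf (A i) z * qf (A i) x := by
    refine mul_nonneg hγ (sum_nonneg fun i hi => ?_)
    obtain ⟨hi₂, hiq⟩ := mem_Icc.1 hi
    have hAi := hA i (by omega) hiq
    exact mul_nonneg (qf_nonneg hAi z) (qf_nonneg hAi x)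
  unfold qrho
  linarith

lemma tendsto_zero_of_mul_le_of_tendsto_atTop {ι : Type*} {l : Filter ι} {ρ d : ι → ℝ} {C : ℝ}
    (hρ : Tendsto ρ l atTop) (hd : ∀ j, 0 ≤ d j) (hC : ∀ j, ρ j * d j ≤ C) :
    Tendsto d l (𝓝 0) := by
  refine squeeze_zero' (Eventually.of_forall hd) ?_ ((tendsto_const_nhds (x := C)).div_atTop hρ)
  filter_upwards [hρ.eventually_gt_atTop 0] with j hj
  rw [le_div_iff₀ hj, mul_comm]
  exact hC j

section Support

variable {ι : Type*} [Fintype ι]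

lemma eventually_support_subset_of_tendsto {α : Type*} {l : Filter α} {v : α → ι → ℝ}
    {a : ι → ℝ} (hv : Tendsto v l (𝓝 a)) :
    ∀ᶠ j in l, Function.support a ⊆ Function.support (v j) := by
  have hcoord : ∀ i, ∀ᶠ j in l, a i ≠ 0 → v j i ≠ 0 := fun i => by
    by_cases hai : a i = 0
    · exact Eventually.of_forall fun _ h => absurd hai h
    · filter_upwards [(tendsto_pi_nhds.1 hv i).eventually_ne hai] with j hj using fun _ => hj
  filter_upwards [eventually_all.2 hcoord] with j hj i using hj i

lemma ncard_support_le_of_tendsto {α : Type*} {l : Filter α} [l.NeBot] {v : α → ι → ℝ}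
    {a : ι → ℝ} {k : ℕ} (hv : Tendsto v l (𝓝 a)) (hk : ∀ j, (Function.support (v j)).ncard ≤ k) :
    (Function.support a).ncard ≤ k := by
  obtain ⟨j, hj⟩ := (eventually_support_subset_of_tendsto hv).exists
  exact (Set.ncard_le_ncard hj (Set.toFinite _)).trans (hk j)

lemma exists_card_eq_of_ncard_support_le {a : ι → ℝ} {k : ℕ}
    (ha : (Function.support a).ncard ≤ k) (hk : k ≤ Fintype.card ι) :
    ∃ L : Finset ι, L.card = k ∧ ∀ i ∉ L, a i = 0 := by
  classical
  rw [Set.ncard_eq_toFinset_card'] at ha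
  obtain ⟨L, hsub, hL⟩ := exists_superset_card_eq ha hk
  refine ⟨L, hL, fun i hi => Function.notMem_support.1 fun hai => hi (hsub ?_)⟩
  simpa using hai

end Support

theorem penalty_sequence_accumulation_general {n q k : ℕ} (hq : 2 ≤ q)
    (A : ℕ → Matrix (Fin n) (Fin n) ℝ)
    (α γ Υ : ℝ) (hα : α = 0 ∨ α = 1) (hγ : 0 ≤ γ)
    (hkn : k ≤ n)
    (hApsd : ∀ i, 1 ≤ i → i ≤ q → (A i).PosSemidef)
    (ρ : ℕ → ℝ)
    (hρ : Filter.Tendsto ρ Filter.atTop Filter.atTop)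
    (x y z : ℕ → Fin n → ℝ)
    (hy : ∀ j, eucNorm (y j) = 1 ∧ (Function.support (y j)).ncard ≤ k)
    (hbound : ∀ j, qrho q A α γ (ρ j) (x j) (y j) (z j) ≤ Υ) :
    ∃ (σ : ℕ → ℕ) (xs : Fin n → ℝ) (L : Finset (Fin n)),
      StrictMono σ ∧ L.card = k ∧
      Filter.Tendsto (fun j => x (σ j)) Filter.atTop (𝓝 xs) ∧
      Filter.Tendsto (fun j => y (σ j)) Filter.atTop (𝓝 xs) ∧
      Filter.Tendsto (fun j => z (σ j)) Filter.atTop (𝓝 xs) ∧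
      eucNorm xs = 1 ∧ ∀ i ∉ L, xs i = 0 := by
  have hα₀ : 0 ≤ α := by rcases hα with rfl | rfl <;> norm_num
  have hpen : Tendsto (fun j => sqnorm (x j - y j) + sqnorm (x j - z j)) atTop (𝓝 0) :=
    tendsto_zero_of_mul_le_of_tendsto_atTop hρ
      (fun j => add_nonneg (sqnorm_nonneg _) (sqnorm_nonneg _))
      (fun j => (penalty_le_qrho hα₀ hγ hApsd (by omega) _ _ _ _).trans (hbound j))
  have hxy : Tendsto (fun j => x j - y j) atTop (𝓝 0) := tendsto_zero_of_sqnorm_tendsto_zero <|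
    squeeze_zero (fun _ => sqnorm_nonneg _) (fun _ => le_add_of_nonneg_right (sqnorm_nonneg _)) hpen
  have hxz : Tendsto (fun j => x j - z j) atTop (𝓝 0) := tendsto_zero_of_sqnorm_tendsto_zero <|
    squeeze_zero (fun _ => sqnorm_nonneg _) (fun _ => le_add_of_nonneg_left (sqnorm_nonneg _)) hpen
  have hy_ball : ∀ j, y j ∈ Metric.closedBall 0 1 := fun j => by
    simpa [← (hy j).1] using norm_le_eucNorm (y j)
  obtain ⟨xs, -, σ, hσ, hy_lim⟩ := tendsto_subseq_of_bounded Metric.isBounded_closedBall hy_ball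
  have hx_lim : Tendsto (fun j => x (σ j)) atTop (𝓝 xs) := by
    simpa using hy_lim.add (hxy.comp hσ.tendsto_atTop)
  have hz_lim : Tendsto (fun j => z (σ j)) atTop (𝓝 xs) := by
    simpa using hx_lim.sub (hxz.comp hσ.tendsto_atTop)
  obtain ⟨L, hL, hxs_L⟩ := exists_card_eq_of_ncard_support_le
    (ncard_support_le_of_tendsto hy_lim fun j => (hy (σ j)).2) (by simpa using hkn)
  have hxs_norm : eucNorm xs = 1 :=
    tendsto_nhds_unique ((continuous_eucNorm.tendsto xs).comp hy_lim) (by simp [Function.comp_def, hy])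
  exact ⟨σ, xs, L, hσ, hL, hx_lim, hy_lim, hz_lim, hxs_norm, hxs_L⟩

theorem penalty_sequence_accumulation {n q k : ℕ} (hq : 2 ≤ q)
    (A : ℕ → Matrix (Fin n) (Fin n) ℝ)
    (α γ Υ : ℝ) (hα : α = 0 ∨ α = 1) (hγ : 0 ≤ γ) (hΥ : 0 < Υ)
    (hk1 : 1 ≤ k) (hkn : k ≤ n)
    (hApsd : ∀ i, 1 ≤ i → i ≤ q → (A i).PosSemidef)
    (ρ : ℕ → ℝ) (hρpos : ∀ j, 0 < ρ j)
    (hρ : Filter.Tendsto ρ Filter.atTop Filter.atTop)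
    (x y z : ℕ → Fin n → ℝ)
    (hy : ∀ j, eucNorm (y j) = 1 ∧ (Function.support (y j)).ncard ≤ k)
    (hbound : ∀ j, qrho q A α γ (ρ j) (x j) (y j) (z j) ≤ Υ) :
    ∃ (σ : ℕ → ℕ) (xs : Fin n → ℝ) (L : Finset (Fin n)),
      StrictMono σ ∧ L.card = k ∧
      Filter.Tendsto (fun j => x (σ j)) Filter.atTop (𝓝 xs) ∧
      Filter.Tendsto (fun j => y (σ j)) Filter.atTop (𝓝 xs) ∧
      Filter.Tendsto (fun j => z (σ j)) Filter.atTop (𝓝 xs) ∧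
      eucNorm xs = 1 ∧ ∀ i ∉ L, xs i = 0 :=
  penalty_sequence_accumulation_general hq A α γ Υ hα hγ hkn hApsd ρ hρ x y z hy hbound
end

section
/- Let q ≥ 2, α ∈ {0,1}, γ ≥ 0, φ > 0, 1 ≤ k ≤ n, let A₀ be a real symmetric positive definite n×n matrix, let A₁, …, A_q be real symmetric positive semidefinite n×n matrices, and let L ⊆ {1,…,n} with |L| = k. Let (ρ_j) be positive reals with ρ_j → ∞, and let (x_j), (y_j), (z_j) in ℝ^n and (λ_j) with λ_j ≥ 0 satisfy for every j: (1) α A₁x_j + γ Σ_{i=2}^{q} (z_jᵀA_i z_j) A_i x_j + ρ_j(2x_j − y_j − z_j) = λ_j A₀ x_j; (2) (x_j)_L ≠ 0 and y_j = (x_j)_L / ‖(x_j)_L‖; (3) γ Σ_{i=2}^{q} (x_jᵀA_i x_j) A_i z_j = ρ_j (x_j − z_j); (4) x_jᵀA₀x_j ≥ φ and λ_j (x_jᵀA₀x_j − φ) = 0. Suppose x_j → x*, y_j → x*, z_j → x* with ‖x*‖ = 1 and x*_i = 0 for all i ∉ L, and suppose Robinson's condition holds at x* with index set L: if (x*)ᵀA₀x*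 = φ, for every (a,b,c) ∈ ℝ × ℝ × ℝ^{Lᶜ} there exist d ∈ ℝ^n and v ≤ 0 with −2 dᵀA₀x* − v = a, 2 dᵀx* = b, and d_i = c_i for i ∉ L; if (x*)ᵀA₀x* > φ, the same with v ∈ ℝ arbitrary. Then there exist λ ≥ 0, μ ∈ ℝ, and w ∈ ℝ^n with w_i = 0 for all i ∈ L such that (α A₁ + 2γ Σ_{i=2}^{q} ((x*)ᵀA_i x*) A_i) x* − λ A₀ x* + μ x* + w = 0 and λ((x*)ᵀA₀x* − φ) = 0; i.e., x* is a KKT point of the sparse volatile mean-reverting portfolio problem. -/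
open Matrix Finset Filter Topology

/-- Euclidean norm on `ℝ^n`. -/
noncomputable def enorm₂ {n : ℕ} (x : Fin n → ℝ) : ℝ := Real.sqrt (sqnorm x)

/-!
Adding (1) and (3) gives `λ_j A₀ x_j - r_j = ρ_j (x_j - y_j)`, where `r_j` tends to
`α A₁ x* + 2γ Σ_i (x*ᵀ A_i x*) A_i x*`. Since `y_j` is a multiple of `x_j` on `L`, the left side is
parallel to `x_j` on the coordinates in `L`, whatever the size of `ρ_j`, and this survives in the
limit. If `λ_j → ∞`, dividing by `λ_j` shows that the constraint is active at `x*` and that `A₀ x*`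
is parallel to `x*` on `L`; Robinson's condition with `(a, b, c) = (-2, 0, 0)` gives a direction `d`
ruling this out. Otherwise a subsequence of `λ_j` converges to some `λ ≥ 0`, and
`λ A₀ x* - lim r_j` is `μ x*` plus a vector vanishing on `L`.
-/

-- Stated through vanishing `2 × 2` minors rather than as `∃ c, ∀ i ∈ L, u i = c * v i`,
-- so that it is a closed condition on `(u, v)`.
def ParallelOn {ι : Type*} (L : Finset ι) (u v : ι → ℝ) : Prop :=
  ∀ i ∈ L, ∀ j ∈ L, u i * v j = u j * v i

namespace ParallelOn

variable {ι : Type*} {L : Finset ι} {u v : ι → ℝ}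

theorem isClosed_setOf (L : Finset ι) :
    IsClosed {p : (ι → ℝ) × (ι → ℝ) | ParallelOn L p.1 p.2} := by
  simp only [ParallelOn, Set.ofPred_forall]
  exact isClosed_biInter fun i _ => isClosed_biInter fun j _ =>
    isClosed_eq (by fun_prop) (by fun_prop)

theorem of_tendsto {α : Type*} {l : Filter α} [l.NeBot] {u' v' : α → ι → ℝ}
    (hu : Tendsto u' l (𝓝 u)) (hv : Tendsto v' l (𝓝 v))
    (h : ∀ᶠ a in l, ParallelOn L (u' a) (v' a)) : ParallelOn L u v :=
  (isClosed_setOf L).mem_of_tendsto (hu.prodMk_nhds hv) h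

theorem smul_left (h : ParallelOn L u v) (c : ℝ) : ParallelOn L (c • u) v := by
  intro i hi j hj
  simp only [Pi.smul_apply, smul_eq_mul, mul_assoc, h i hi j hj]

theorem exists_eq_smul_add (h : ParallelOn L u v) (hv : ∃ i ∈ L, v i ≠ 0) :
    ∃ (μ : ℝ) (w : ι → ℝ), (∀ i ∈ L, w i = 0) ∧ u = μ • v + w := by
  obtain ⟨i₀, hi₀, hv₀⟩ := hv
  refine ⟨u i₀ / v i₀, u - (u i₀ / v i₀) • v, fun i hi => ?_, by abel⟩
  have := h i hi i₀ hi₀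
  simp only [Pi.sub_apply, Pi.smul_apply, smul_eq_mul]
  field_simp
  linarith

end ParallelOn

theorem parallelOn_smul_sub_smul_proj {n : ℕ} (L : Finset (Fin n)) (ρ c : ℝ) (x : Fin n → ℝ) :
    ParallelOn L (ρ • (x - c • proj L x)) x := by
  intro i hi j hj
  simp only [proj, hi, hj, if_true, Pi.smul_apply, Pi.sub_apply, smul_eq_mul]
  ring

theorem dotProduct_eq_zero_of_support_disjoint {ι : Type*} [Fintype ι] {L : Finset ι}
    {d w : ι → ℝ} (hd : ∀ i ∉ L, d i = 0) (hw : ∀ i ∈ L, w i = 0) : d ⬝ᵥ w = 0 :=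
  Finset.sum_eq_zero fun i _ => by
    by_cases hi : i ∈ L
    · simp [hw i hi]
    · simp [hd i hi]

@[fun_prop]
theorem continuous_qf {n : ℕ} (P : Matrix (Fin n) (Fin n) ℝ) : Continuous (qf P) := by
  unfold qf; fun_prop

theorem Filter.Tendsto.const_mulVec {ι α : Type*} [Fintype ι] {l : Filter α} {x : α → ι → ℝ}
    {xs : ι → ℝ} (hx : Tendsto x l (𝓝 xs)) (P : Matrix ι ι ℝ) :
    Tendsto (fun a => P *ᵥ x a) l (𝓝 (P *ᵥ xs)) :=
  ((continuous_const.matrix_mulVec continuous_id).tendsto xs).comp hx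

section Multiplier

variable {n : ℕ} {P : Matrix (Fin n) (Fin n) ℝ} {φ : ℝ} {L : Finset (Fin n)} {xs r₀ : Fin n → ℝ}

theorem exists_kkt_of_tendsto_multiplier {α : Type*} {l : Filter α} [l.NeBot]
    {x r : α → Fin n → ℝ} {lam : α → ℝ} {ls : ℝ}
    (hx : Tendsto x l (𝓝 xs)) (hr : Tendsto r l (𝓝 r₀)) (hlam : Tendsto lam l (𝓝 ls))
    (hlam0 : ∀ᶠ a in l, 0 ≤ lam a) (hslack : ∀ᶠ a in l, lam a * (qf P (x a) - φ) = 0)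
    (hpar : ∀ᶠ a in l, ParallelOn L (lam a • P *ᵥ x a - r a) (x a))
    (hsupp : ∃ i ∈ L, xs i ≠ 0) :
    ∃ (lams mus : ℝ) (w : Fin n → ℝ), 0 ≤ lams ∧ (∀ i ∈ L, w i = 0) ∧
      r₀ - lams • P *ᵥ xs + mus • xs + w = 0 ∧ lams * (qf P xs - φ) = 0 := by
  have hPx := hx.const_mulVec P
  have hpar₀ : ParallelOn L (ls • P *ᵥ xs - r₀) xs :=
    ParallelOn.of_tendsto ((hlam.smul hPx).sub hr) hx hpar
  obtain ⟨μ, w, hw, hμw⟩ := hpar₀.exists_eq_smul_add hsupp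
  refine ⟨ls, μ, w, ge_of_tendsto hlam hlam0, hw, ?_, ?_⟩
  · rw [add_assoc, ← hμw]; abel
  · exact tendsto_nhds_unique
      (hlam.mul (((continuous_qf P).tendsto xs).comp hx |>.sub_const φ))
      (tendsto_const_nhds.congr' (hslack.mono fun a ha => ha.symm))

theorem not_tendsto_atTop_multiplier {α : Type*} {l : Filter α} [l.NeBot]
    {x r : α → Fin n → ℝ} {lam : α → ℝ}
    (hx : Tendsto x l (𝓝 xs)) (hr : Tendsto r l (𝓝 r₀))
    (hslack : ∀ᶠ a in l, lam a * (qf P (x a) - φ) = 0)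
    (hpar : ∀ᶠ a in l, ParallelOn L (lam a • P *ᵥ x a - r a) (x a))
    (hsupp : ∃ i ∈ L, xs i ≠ 0)
    (hrob : qf P xs = φ → ∃ d : Fin n → ℝ,
      d ⬝ᵥ P *ᵥ xs ≠ 0 ∧ d ⬝ᵥ xs = 0 ∧ ∀ i ∉ L, d i = 0) :
    ¬ Tendsto lam l atTop := by
  intro hlam
  have hpos : ∀ᶠ a in l, 0 < lam a := hlam.eventually_gt_atTop 0
  have hPx := hx.const_mulVec P
  -- Dividing by the multiplier, the cost gradient `r` disappears in the limit.
  have hscaled : Tendsto (fun a => (lam a)⁻¹ • (lam a • P *ᵥ x a - r a)) l (𝓝 (P *ᵥ xs)) := by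
    have h := hPx.sub ((tendsto_inv_atTop_zero.comp hlam).smul hr)
    rw [zero_smul, sub_zero] at h
    refine h.congr' (hpos.mono fun a ha => ?_)
    simp only [Function.comp_apply, smul_sub, smul_smul, inv_mul_cancel₀ ha.ne', one_smul]
  have hparP : ParallelOn L (P *ᵥ xs) xs :=
    ParallelOn.of_tendsto hscaled hx ((hpar.and hpos).mono fun a ha => ha.1.smul_left _)
  have hactive : qf P xs = φ := by
    refine tendsto_nhds_unique (((continuous_qf P).tendsto xs).comp hx) ?_
    refine tendsto_const_nhds.congr' ((hslack.and hpos).mono fun a ha => ?_)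
    have := (mul_eq_zero.mp ha.1).resolve_left ha.2.ne'
    simp only [Function.comp_apply]; linarith
  obtain ⟨d, hdP, hdx, hd⟩ := hrob hactive
  obtain ⟨μ, w, hw, hμw⟩ := hparP.exists_eq_smul_add hsupp
  apply hdP
  rw [hμw, dotProduct_add, dotProduct_smul, hdx, dotProduct_eq_zero_of_support_disjoint hd hw]
  simp

theorem exists_kkt_of_tendsto {x r : ℕ → Fin n → ℝ} {lam : ℕ → ℝ} (hlam : ∀ j, 0 ≤ lam j)
    (hx : Tendsto x atTop (𝓝 xs)) (hr : Tendsto r atTop (𝓝 r₀))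
    (hslack : ∀ j, lam j * (qf P (x j) - φ) = 0)
    (hpar : ∀ j, ParallelOn L (lam j • P *ᵥ x j - r j) (x j))
    (hsupp : ∃ i ∈ L, xs i ≠ 0)
    (hrob : qf P xs = φ → ∃ d : Fin n → ℝ,
      d ⬝ᵥ P *ᵥ xs ≠ 0 ∧ d ⬝ᵥ xs = 0 ∧ ∀ i ∉ L, d i = 0) :
    ∃ (lams mus : ℝ) (w : Fin n → ℝ), 0 ≤ lams ∧ (∀ i ∈ L, w i = 0) ∧
      r₀ - lams • P *ᵥ xs + mus • xs + w = 0 ∧ lams * (qf P xs - φ) = 0 := by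
  have hunbdd : ¬ Tendsto lam atTop atTop := not_tendsto_atTop_multiplier hx hr
    (.of_forall hslack) (.of_forall hpar) hsupp hrob
  obtain ⟨M, hM⟩ : ∃ M, ∃ᶠ j in atTop, lam j < M := by
    simpa only [tendsto_atTop, not_forall, not_eventually, not_le] using hunbdd
  obtain ⟨ls, -, g, hg, hlam_g⟩ := tendsto_subseq_of_frequently_bounded
    (Metric.isBounded_Icc 0 M) (hM.mono fun j hj => ⟨hlam j, hj.le⟩)
  exact exists_kkt_of_tendsto_multiplier (hx.comp hg.tendsto_atTop) (hr.comp hg.tendsto_atTop)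
    hlam_g (.of_forall fun m => hlam (g m)) (.of_forall fun m => hslack (g m))
    (.of_forall fun m => hpar (g m)) hsupp

end Multiplier

theorem limit_is_kkt_point_general {n q : ℕ}
    (A : ℕ → Matrix (Fin n) (Fin n) ℝ)
    (α γ φ : ℝ)
    (L : Finset (Fin n))
    (ρ : ℕ → ℝ)
    (x y z : ℕ → Fin n → ℝ) (lam : ℕ → ℝ) (hlam : ∀ j, 0 ≤ lam j)
    (h1 : ∀ j, α • (A 1).mulVec (x j)
        + γ • (∑ i ∈ Finset.Icc 2 q, qf (A i) (z j) • A i).mulVec (x j)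
        + ρ j • ((2 : ℝ) • x j - y j - z j)
      = lam j • (A 0).mulVec (x j))
    (h2 : ∀ j, proj L (x j) ≠ 0 ∧ y j = (enorm₂ (proj L (x j)))⁻¹ • proj L (x j))
    (h3 : ∀ j, γ • (∑ i ∈ Finset.Icc 2 q, qf (A i) (x j) • A i).mulVec (z j)
      = ρ j • (x j - z j))
    (h4 : ∀ j, φ ≤ qf (A 0) (x j) ∧ lam j * (qf (A 0) (x j) - φ) = 0)
    (xs : Fin n → ℝ)
    (hxs : Filter.Tendsto x Filter.atTop (𝓝 xs))
    (hzs : Filter.Tendsto z Filter.atTop (𝓝 xs))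
    (hnorm : enorm₂ xs = 1) (hzero : ∀ i ∉ L, xs i = 0)
    (hRobActive : qf (A 0) xs = φ →
      ∀ (a b : ℝ) (c : {i : Fin n // i ∉ L} → ℝ),
        ∃ (d : Fin n → ℝ) (v : ℝ), v ≤ 0 ∧
          -2 * (d ⬝ᵥ (A 0).mulVec xs) - v = a ∧
          2 * (d ⬝ᵥ xs) = b ∧
          ∀ (i : Fin n) (hi : i ∉ L), d i = c ⟨i, hi⟩) :
    ∃ (lams mus : ℝ) (w : Fin n → ℝ), 0 ≤ lams ∧ (∀ i ∈ L, w i = 0) ∧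
      α • (A 1).mulVec xs
          + (2 * γ) • (∑ i ∈ Finset.Icc 2 q, qf (A i) xs • A i).mulVec xs
          - lams • (A 0).mulVec xs + mus • xs + w = 0 ∧
      lams * (qf (A 0) xs - φ) = 0 := by
  set B : (Fin n → ℝ) → Matrix (Fin n) (Fin n) ℝ := fun v => ∑ i ∈ Icc 2 q, qf (A i) v • A i
  set r : ℕ → Fin n → ℝ := fun j => α • A 1 *ᵥ x j + γ • B (z j) *ᵥ x j + γ • B (x j) *ᵥ z j
  have hr : Tendsto r atTop (𝓝 (α • A 1 *ᵥ xs + (2 * γ) • B xs *ᵥ xs)) := by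
    have hcont : Continuous fun p : (Fin n → ℝ) × (Fin n → ℝ) =>
        α • A 1 *ᵥ p.1 + γ • B p.2 *ᵥ p.1 + γ • B p.1 *ᵥ p.2 := by fun_prop
    have h := (hcont.tendsto (xs, xs)).comp (hxs.prodMk_nhds hzs)
    rw [show (2 * γ) • B xs *ᵥ xs = γ • B xs *ᵥ xs + γ • B xs *ᵥ xs by module, ← add_assoc]
    exact h
  have hpar : ∀ j, ParallelOn L (lam j • A 0 *ᵥ x j - r j) (x j) := fun j => by
    have hdiff : lam j • A 0 *ᵥ x j - r j = ρ j • (x j - y j) := by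
      linear_combination (norm := module) -h1 j - h3 j
    rw [hdiff, (h2 j).2]
    exact parallelOn_smul_sub_smul_proj L _ _ _
  have hxs_L : ∃ i ∈ L, xs i ≠ 0 := by
    by_contra! h
    have : xs = 0 := funext fun i => if hi : i ∈ L then h i hi else hzero i hi
    simp [this, enorm₂, sqnorm] at hnorm
  refine exists_kkt_of_tendsto hlam hxs hr (fun j => (h4 j).2) hpar hxs_L fun hact => ?_
  obtain ⟨d, v, hv, hdA, hdx, hd⟩ := hRobActive hact (-2) 0 fun _ => 0
  exact ⟨d, by linarith, by linarith, hd⟩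

/-- Theorem 2(ii): the limit point is a KKT point. -/
theorem limit_is_kkt_point {n q k : ℕ} (hq : 2 ≤ q)
    (A : ℕ → Matrix (Fin n) (Fin n) ℝ)
    (α γ φ : ℝ) (hα : α = 0 ∨ α = 1) (hγ : 0 ≤ γ) (hφ : 0 < φ)
    (hk1 : 1 ≤ k) (hkn : k ≤ n)
    (hA0 : (A 0).PosDef) (hApsd : ∀ i, 1 ≤ i → i ≤ q → (A i).PosSemidef)
    (L : Finset (Fin n)) (hL : L.card = k)
    (ρ : ℕ → ℝ) (hρpos : ∀ j, 0 < ρ j)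
    (hρ : Filter.Tendsto ρ Filter.atTop Filter.atTop)
    (x y z : ℕ → Fin n → ℝ) (lam : ℕ → ℝ) (hlam : ∀ j, 0 ≤ lam j)
    (h1 : ∀ j, α • (A 1).mulVec (x j)
        + γ • (∑ i ∈ Finset.Icc 2 q, qf (A i) (z j) • A i).mulVec (x j)
        + ρ j • ((2 : ℝ) • x j - y j - z j)
      = lam j • (A 0).mulVec (x j))
    (h2 : ∀ j, proj L (x j) ≠ 0 ∧ y j = (enorm₂ (proj L (x j)))⁻¹ • proj L (x j))
    (h3 : ∀ j, γ • (∑ i ∈ Finset.Icc 2 q, qf (A i) (x j) • A i).mulVec (z j)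
      = ρ j • (x j - z j))
    (h4 : ∀ j, φ ≤ qf (A 0) (x j) ∧ lam j * (qf (A 0) (x j) - φ) = 0)
    (xs : Fin n → ℝ)
    (hxs : Filter.Tendsto x Filter.atTop (𝓝 xs))
    (hys : Filter.Tendsto y Filter.atTop (𝓝 xs))
    (hzs : Filter.Tendsto z Filter.atTop (𝓝 xs))
    (hnorm : enorm₂ xs = 1) (hzero : ∀ i ∉ L, xs i = 0)
    (hRobActive : qf (A 0) xs = φ →
      ∀ (a b : ℝ) (c : {i : Fin n // i ∉ L} → ℝ),
        ∃ (d : Fin n → ℝ) (v : ℝ), v ≤ 0 ∧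
          -2 * (d ⬝ᵥ (A 0).mulVec xs) - v = a ∧
          2 * (d ⬝ᵥ xs) = b ∧
          ∀ (i : Fin n) (hi : i ∉ L), d i = c ⟨i, hi⟩)
    (hRobInactive : φ < qf (A 0) xs →
      ∀ (a b : ℝ) (c : {i : Fin n // i ∉ L} → ℝ),
        ∃ (d : Fin n → ℝ) (v : ℝ),
          -2 * (d ⬝ᵥ (A 0).mulVec xs) - v = a ∧
          2 * (d ⬝ᵥ xs) = b ∧
          ∀ (i : Fin n) (hi : i ∉ L), d i = c ⟨i, hi⟩) :
    ∃ (lams mus : ℝ) (w : Fin n → ℝ), 0 ≤ lams ∧ (∀ i ∈ L, w i = 0) ∧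
      α • (A 1).mulVec xs
          + (2 * γ) • (∑ i ∈ Finset.Icc 2 q, qf (A i) xs • A i).mulVec xs
          - lams • (A 0).mulVec xs + mus • xs + w = 0 ∧
      lams * (qf (A 0) xs - φ) = 0 :=
  limit_is_kkt_point_general A α γ φ L ρ x y z lam hlam h1 h2 h3 h4 xs hxs hzs hnorm hzero
    hRobActive
end
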